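/- For every l ≥ 1 the following identity holds in B: Z_l = Σ_{k=0}^{min(l,n)} (−1)^{l−k} Σ_{I ⊆ {1,…,n}, |I| = k} h_{l−k}(t_I)·∏_{j∈I} u_j v_j, where h_q(t_I) is the complete homogeneous symmetric polynomial of degree q in the variables {t_j : j ∈ I} (with h_0 = 1), and the product ∏_{j∈I} u_j v_j is taken in increasing order of j. -/

import Mathlib

/-!
Each `u_i v_i` is a product of two elements of degree one, hence central in `B`, so `Z(s)` is
the image of the same product computed in the commutative centre. There
`∏_i (1 + w_i s (1 + t_i s)⁻¹) = ∑_I w_I s^|I| ∏_{i ∈ I} (1 + t_i s)⁻¹`, and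
`∏_{i ∈ I} (1 + t_i s)⁻¹ = ∑_q (-1)^q h_q(t_I) s^q` by induction on `I`, using
`h_{q+1}(t_{I ∪ a}) = h_{q+1}(t_I) + t_a h_q(t_{I ∪ a})`.
-/

open scoped BigOperators

set_option synthInstance.maxHeartbeats 1000000
set_option maxHeartbeats 1000000

noncomputable section

variable (R : Type) [CommRing R] (n : ℕ)

/-- The polynomial ring `R[t_1, …, t_n]`. -/
abbrev Pn := MvPolynomial (Fin n) R

/-- `B`: the exterior algebra over `Pn` on the `2n` generators `u_1,…,u_n,v_1,…,v_n`. -/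
abbrev Bn := ExteriorAlgebra (Pn R n) ((Fin n ⊕ Fin n) → Pn R n)

/-- The variable `t_i`. -/
def tv (i : Fin n) : Pn R n := MvPolynomial.X i

/-- The exterior generator `u_i`. -/
def uu (i : Fin n) : Bn R n := ExteriorAlgebra.ι (Pn R n) (Pi.single (Sum.inl i) 1)

/-- The exterior generator `v_i`. -/
def vv (i : Fin n) : Bn R n := ExteriorAlgebra.ι (Pn R n) (Pi.single (Sum.inr i) 1)

/-- `X_l = ∑ t_i^(l-1) u_i` (indices `i` run over `Fin n`, `l ≥ 1`). -/
def Xel (l : ℕ) : Bn R n :=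
  ∑ i : Fin n, algebraMap (Pn R n) (Bn R n) (tv R n i ^ (l - 1)) * uu R n i

/-- `Y_l = ∑ t_i^(l-1) v_i`. -/
def Yel (l : ℕ) : Bn R n :=
  ∑ i : Fin n, algebraMap (Pn R n) (Bn R n) (tv R n i ^ (l - 1)) * vv R n i

/-- `X_I`, the product of the `X_{i+1}` for `i ∈ I`, in increasing order. -/
def XI (I : Finset (Fin n)) : Bn R n := ((I.sort (· ≤ ·)).map fun i => Xel R n (i.1 + 1)).prod

/-- `Y_I`, the product of the `Y_{i+1}` for `i ∈ I`, in increasing order. -/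
def YI (I : Finset (Fin n)) : Bn R n := ((I.sort (· ≤ ·)).map fun i => Yel R n (i.1 + 1)).prod

/-- `(1 + p s)⁻¹ = ∑ (-p)^k s^k`, the inverse of `1 + p s` in `Pn[[s]]`. -/
def invOnePlus (p : Pn R n) : PowerSeries (Pn R n) := PowerSeries.mk fun k => (-p) ^ k

/-- The `i`-th factor `1 + s u_i v_i (1 + t_i s)⁻¹` of the power series defining the `Z_l`. -/
def Zfactor (i : Fin n) : PowerSeries (Bn R n) :=
  1 + PowerSeries.C (uu R n i * vv R n i) *
    PowerSeries.map (algebraMap (Pn R n) (Bn R n)) (PowerSeries.X * invOnePlus R n (tv R n i))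

/-- The power series `∏_{i=1}^n (1 + s u_i v_i (1 + t_i s)⁻¹) ∈ B[[s]]`. -/
def Zseries : PowerSeries (Bn R n) := ((List.finRange n).map (Zfactor R n)).prod

/-- `Z_l`, the coefficient of `s^l` in `Zseries`. -/
def Zel (l : ℕ) : Bn R n := PowerSeries.coeff l (Zseries R n)

/-- The Vandermonde matrix `V = (t_j^(i-1))`. -/
def Vmat : Matrix (Fin n) (Fin n) (Pn R n) := Matrix.of fun i j => tv R n j ^ (i : ℕ)

/-- The Vandermonde determinant `Δ = det V = ∏_{i<j} (t_j - t_i)`. -/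
def Dl : Pn R n := (Vmat R n).det


/-- The complete homogeneous symmetric polynomial of degree `q` in the variables
`{t_j : j ∈ I}`: the sum over all monomials of total degree `q` in those variables. -/
def hcomplete (I : Finset (Fin n)) (q : ℕ) : Pn R n :=
  ∑ m ∈ I.sym q, ((m : Multiset (Fin n)).map (tv R n)).prod

/-- The product `∏_{j ∈ I} u_j v_j`, taken in increasing order of `j`. -/
def uvProd (I : Finset (Fin n)) : Bn R n :=
  ((I.sort (· ≤ ·)).map fun j => uu R n j * vv R n j).prod

namespace ExteriorAlgebra

variable {K M : Type*} [CommRing K] [AddCommGroup M] [Module K M]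

theorem ι_mul_ι_comm (x y : M) : ι K x * ι K y = -(ι K y * ι K x) :=
  eq_neg_of_add_eq_zero_left (ι_add_mul_swap x y)

theorem ι_mul_ι_mem_center (x y : M) :
    ι K x * ι K y ∈ Subalgebra.center K (ExteriorAlgebra K M) := by
  rw [Subalgebra.mem_center_iff]
  intro b
  induction b using ExteriorAlgebra.induction with
  | algebraMap r => exact Algebra.commutes r _
  | ι m => rw [← mul_assoc, ι_mul_ι_comm m x, neg_mul, mul_assoc, ι_mul_ι_comm m y, mul_neg,
      neg_neg, ← mul_assoc]
  | mul a b ha hb => rw [mul_assoc, hb, ← mul_assoc, ha, mul_assoc]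
  | add a b ha hb => rw [add_mul, ha, hb, mul_add]

end ExteriorAlgebra

namespace Finset

variable {α A : Type*} [DecidableEq α] [CommSemiring A]

theorem filter_mem_sym_succ_eq_image_cons (a : α) (s : Finset α) (q : ℕ) :
    ((insert a s).sym (q + 1)).filter (a ∈ ·) = ((insert a s).sym q).image (Sym.cons a) := by
  ext m
  simp only [mem_filter, mem_image, mem_sym_iff]
  constructor
  · rintro ⟨hm, ha⟩
    refine ⟨m.erase a ha, fun b hb => hm b ?_, Sym.cons_erase ha⟩
    rw [← Sym.mem_coe, Sym.coe_erase] at hb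
    exact Multiset.mem_of_mem_erase hb
  · rintro ⟨m, hm, rfl⟩
    refine ⟨fun b hb => ?_, Sym.mem_cons_self a m⟩
    rcases Sym.mem_cons.mp hb with rfl | hb
    exacts [mem_insert_self _ _, hm b hb]

theorem sum_sym_insert_succ (f : α → A) {a : α} {s : Finset α} (ha : a ∉ s) (q : ℕ) :
    ∑ m ∈ (insert a s).sym (q + 1), ((m : Multiset α).map f).prod
      = ∑ m ∈ s.sym (q + 1), ((m : Multiset α).map f).prod
        + f a * ∑ m ∈ (insert a s).sym q, ((m : Multiset α).map f).prod := by
  have hnot : ((insert a s).sym (q + 1)).filter (a ∉ ·) = s.sym (q + 1) := by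
    ext m
    simp only [mem_filter, mem_sym_iff, mem_insert]
    exact ⟨fun ⟨hm, ha'⟩ b hb => (hm b hb).resolve_left (by rintro rfl; exact ha' hb),
      fun hm => ⟨fun b hb => Or.inr (hm b hb), fun h => ha (hm a h)⟩⟩
  rw [← sum_filter_not_add_sum_filter _ (a ∈ ·), hnot, filter_mem_sym_succ_eq_image_cons,
    sum_image fun _ _ _ _ h => (Sym.cons_inj_right a _ _).mp h, mul_sum]
  simp only [Sym.coe_cons, Multiset.map_cons, Multiset.prod_cons]

end Finset

open PowerSeries

section CompleteHomogeneous

variable {R n}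

theorem hcomplete_zero (I : Finset (Fin n)) : hcomplete R n I 0 = 1 := by
  simp only [hcomplete, Finset.sym_zero, Finset.sum_singleton]
  rfl

theorem hcomplete_empty_succ (q : ℕ) : hcomplete R n ∅ (q + 1) = 0 := by
  simp [hcomplete]

theorem hcomplete_insert_succ {a : Fin n} {I : Finset (Fin n)} (ha : a ∉ I) (q : ℕ) :
    hcomplete R n (insert a I) (q + 1)
      = hcomplete R n I (q + 1) + tv R n a * hcomplete R n (insert a I) q :=
  Finset.sum_sym_insert_succ _ ha q

theorem invOnePlus_eq_rescale (p : Pn R n) : invOnePlus R n p = rescale (-p) (mk 1) := by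
  ext1 k
  simp [invOnePlus, coeff_rescale]

theorem one_add_C_mul_X_mul_invOnePlus (p : Pn R n) : (1 + C p * X) * invOnePlus R n p = 1 := by
  have h : 1 + C p * X = rescale (-p) (1 - X) := by simp [rescale_X, sub_eq_add_neg]
  rw [h, invOnePlus_eq_rescale, ← map_mul, mul_comm, mk_one_mul_one_sub_eq_one, map_one]

variable (R n) in
def hSeries (I : Finset (Fin n)) : PowerSeries (Pn R n) := mk fun q => (-1) ^ q * hcomplete R n I q

theorem one_add_C_mul_X_mul_hSeries_insert {a : Fin n} {I : Finset (Fin n)} (ha : a ∉ I) :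
    (1 + C (tv R n a) * X) * hSeries R n (insert a I) = hSeries R n I := by
  ext1 (_ | q)
  · simp [hSeries, hcomplete_zero]
  · rw [add_mul, one_mul, map_add, mul_assoc, coeff_C_mul, coeff_succ_X_mul]
    simp only [hSeries, coeff_mk, hcomplete_insert_succ ha, pow_succ]
    ring

theorem prod_invOnePlus (I : Finset (Fin n)) :
    ∏ i ∈ I, invOnePlus R n (tv R n i) = hSeries R n I := by
  classical
  induction I using Finset.induction_on with
  | empty =>
    ext1 (_ | q)
    · simp [hSeries, hcomplete_zero]
    · simp [hSeries, hcomplete_empty_succ, coeff_one]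
  | insert a I ha ih =>
    rw [Finset.prod_insert ha, ih, ← one_add_C_mul_X_mul_hSeries_insert ha, ← mul_assoc,
      mul_comm (invOnePlus R n _), one_add_C_mul_X_mul_invOnePlus, one_mul]

end CompleteHomogeneous

section Expansion

variable {R n} {A : Type*} [CommRing A] [Algebra (Pn R n) A]

theorem prod_one_add_C_mul_map_X_mul_invOnePlus (w : Fin n → A) :
    ∏ i, (1 + C (w i) * map (algebraMap (Pn R n) A) (X * invOnePlus R n (tv R n i)))
      = ∑ k ∈ Finset.range (n + 1), ∑ I ∈ Finset.univ.powersetCard k,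
          C (∏ i ∈ I, w i) * map (algebraMap (Pn R n) A) (X ^ k * hSeries R n I) := by
  rw [Finset.prod_one_add, Finset.sum_powerset, Finset.card_univ, Fintype.card_fin]
  refine Finset.sum_congr rfl fun k _ => Finset.sum_congr rfl fun I hI => ?_
  rw [Finset.prod_mul_distrib, ← map_prod, ← map_prod, Finset.prod_mul_distrib,
    Finset.prod_const, prod_invOnePlus, (Finset.mem_powersetCard.mp hI).2]

theorem coeff_prod_one_add_C_mul_map_X_mul_invOnePlus (w : Fin n → A) (l : ℕ) :
    coeff l (∏ i, (1 + C (w i) * map (algebraMap (Pn R n) A) (X * invOnePlus R n (tv R n i))))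
      = ∑ k ∈ Finset.range (min l n + 1), (-1) ^ (l - k) *
          ∑ I ∈ Finset.univ.powersetCard k,
            algebraMap (Pn R n) A (hcomplete R n I (l - k)) * ∏ i ∈ I, w i := by
  have hrange : (Finset.range (n + 1)).filter (· ≤ l) = Finset.range (min l n + 1) := by
    ext k
    simp only [Finset.mem_filter, Finset.mem_range]
    omega
  rw [prod_one_add_C_mul_map_X_mul_invOnePlus, map_sum, ← hrange, Finset.sum_filter]
  refine Finset.sum_congr rfl fun k _ => ?_
  simp only [map_sum, coeff_C_mul, coeff_map, coeff_X_pow_mul', hSeries, coeff_mk]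
  split_ifs
  · simp only [Finset.mul_sum, map_mul, map_pow, map_neg, map_one]
    exact Finset.sum_congr rfl fun I _ => by ring
  · simp

end Expansion

abbrev centerBn : Subalgebra (Pn R n) (Bn R n) := Subalgebra.center (Pn R n) (Bn R n)

section Center

variable {R n}

def uvCenter (i : Fin n) : centerBn R n :=
  ⟨uu R n i * vv R n i, ExteriorAlgebra.ι_mul_ι_mem_center _ _⟩

theorem coe_prod_uvCenter (I : Finset (Fin n)) :
    ((∏ i ∈ I, uvCenter i : centerBn R n) : Bn R n) = uvProd R n I := by
  rw [Finset.prod_eq_multiset_prod, ← Finset.sort_eq I (· ≤ ·), Multiset.map_coe,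
    Multiset.prod_coe, ← Subalgebra.val_apply, map_list_prod, List.map_map]
  rfl

theorem map_val_one_add_C_uvCenter_mul (i : Fin n) :
    map ((centerBn R n).val : centerBn R n →+* Bn R n)
      (1 + C (uvCenter i) * map (algebraMap (Pn R n) _) (X * invOnePlus R n (tv R n i)))
      = Zfactor R n i := by
  have hmap (S : PowerSeries (Pn R n)) : map ((centerBn R n).val : centerBn R n →+* Bn R n)
      (map (algebraMap (Pn R n) _) S) = map (algebraMap (Pn R n) (Bn R n)) S := by
    rw [← RingHom.comp_apply, ← map_comp]
    rfl
  rw [map_add, map_one, map_mul, map_C, hmap]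
  rfl

theorem Zseries_eq_map_center :
    Zseries R n = map ((centerBn R n).val : centerBn R n →+* Bn R n)
      (∏ i, (1 + C (uvCenter i) *
        map (algebraMap (Pn R n) _) (X * invOnePlus R n (tv R n i)))) := by
  rw [Zseries, Fin.prod_univ_def, map_list_prod, List.map_map]
  exact congrArg List.prod (List.map_congr_left fun i _ => (map_val_one_add_C_uvCenter_mul i).symm)

end Center

theorem Zel_eq_closed_formula_general (n : ℕ) (l : ℕ) :
    Zel ℤ n l = ∑ k ∈ Finset.range (min l n + 1), ((-1 : Bn ℤ n) ^ (l - k)) *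
      ∑ I ∈ (Finset.univ.powersetCard k : Finset (Finset (Fin n))),
        algebraMap (Pn ℤ n) (Bn ℤ n) (hcomplete ℤ n I (l - k)) * uvProd ℤ n I := by
  rw [Zel, Zseries_eq_map_center, coeff_map, coeff_prod_one_add_C_mul_map_X_mul_invOnePlus]
  simp only [map_sum, map_mul, map_pow, RingHom.coe_coe, AlgHom.commutes, Subalgebra.coe_val,
    coe_prod_uvCenter]
  -- `↑(-1) = -1` is left: `simp` does not see through the centre's `CommRing` instance
  rfl

/-- The closed formula for `Z_l`:
`Z_l = ∑_{k=0}^{min(l,n)} (-1)^{l-k} ∑_{|I|=k} h_{l-k}(t_I)·∏_{j∈I} u_j v_j`. -/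
theorem Zel_eq_closed_formula (n : ℕ) (hn : 1 ≤ n) (l : ℕ) (hl : 1 ≤ l) :
    Zel ℤ n l = ∑ k ∈ Finset.range (min l n + 1), ((-1 : Bn ℤ n) ^ (l - k)) *
      ∑ I ∈ (Finset.univ.powersetCard k : Finset (Finset (Fin n))),
        algebraMap (Pn ℤ n) (Bn ℤ n) (hcomplete ℤ n I (l - k)) * uvProd ℤ n I :=
  Zel_eq_closed_formula_general n l

end
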